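/- Let 𝒮 be a maximal nested collection with support S and let s ∈ S − S^max. Then the internal mutation μ_s(𝒮), obtained from 𝒮 by removing S_s and adding (S_{s^+} − {s}) ⊕ s^+, is a maximal nested collection with support S. Furthermore, μ_s(𝒮) is the unique maximal nested collection with support S, other than 𝒮 itself, that contains all the members S_r of 𝒮 with r ≠ s. -/

import Mathlib

open MvPolynomial

/-- Reachability inside a subset `U` of vertices, along edges of `E`. -/
def ReachIn {n : ℕ} (E : Fin n → Fin n → Prop) (U : Finset (Fin n)) (a b : Fin n) : Prop :=
  Relation.ReflTransGen (fun x y => E x y ∧ x ∈ U ∧ y ∈ U) a b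

/-- A nonempty subset `I` is strongly connected if any vertex of `I` can reach any
other vertex of `I` by a directed path staying inside `I`. -/
def StronglyConnected {n : ℕ} (E : Fin n → Fin n → Prop) (I : Finset (Fin n)) : Prop :=
  I.Nonempty ∧ ∀ a ∈ I, ∀ b ∈ I, ReachIn E I a b

open Classical in
/-- The strongly connected component of `x` in the induced subgraph on `U`. -/
noncomputable def scc {n : ℕ} (E : Fin n → Fin n → Prop) (U : Finset (Fin n)) (x : Fin n) :
    Finset (Fin n) :=
  U.filter fun y => ReachIn E U x y ∧ ReachIn E U y x

/-- `S ⊕ j` : the strongly connected component of `S ∪ {j}` containing `j`. -/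
noncomputable def oplus {n : ℕ} (E : Fin n → Fin n → Prop) (S : Finset (Fin n)) (j : Fin n) :
    Finset (Fin n) :=
  scc E (insert j S) j

/-- `S ⊖ j = (S ∪ {j}) − (S ⊕ j)`. -/
noncomputable def ominus {n : ℕ} (E : Fin n → Fin n → Prop) (S : Finset (Fin n)) (j : Fin n) :
    Finset (Fin n) :=
  insert j S \ oplus E S j

/-- A family of strongly connected subsets is nested if any two members are nested or
disjoint, and any tuple of pairwise disjoint members are exactly the strongly connected
components of their union. -/
def Nested {n : ℕ} (E : Fin n → Fin n → Prop) (𝒮 : Finset (Finset (Fin n))) : Prop :=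
  (∀ I ∈ 𝒮, StronglyConnected E I) ∧
  (∀ I ∈ 𝒮, ∀ J ∈ 𝒮, I ⊆ J ∨ J ⊆ I ∨ Disjoint I J) ∧
  (∀ 𝒯 ⊆ 𝒮, (∀ I ∈ 𝒯, ∀ J ∈ 𝒯, I ≠ J → Disjoint I J) →
    ∀ I ∈ 𝒯, ∀ x ∈ I, scc E (𝒯.sup id) x = I)

/-- The support of a collection: the union of its members. -/
def nsupport {n : ℕ} (𝒮 : Finset (Finset (Fin n))) : Finset (Fin n) := 𝒮.sup id

/-- A nested collection is maximal (for its support) if the only nested collection with the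
same support containing it is itself. -/
def MaximalNested {n : ℕ} (E : Fin n → Fin n → Prop) (𝒮 : Finset (Finset (Fin n))) : Prop :=
  Nested E 𝒮 ∧ ∀ 𝒮' : Finset (Finset (Fin n)),
    Nested E 𝒮' → nsupport 𝒮' = nsupport 𝒮 → 𝒮 ⊆ 𝒮' → 𝒮' = 𝒮

open Classical in
/-- `S_s`: the smallest member of `𝒮` containing `s` (junk value `∅` if there is none). -/
noncomputable def minMem {n : ℕ} (𝒮 : Finset (Finset (Fin n))) (s : Fin n) :
    Finset (Fin n) :=
  if h : ∃ I, I ∈ 𝒮 ∧ s ∈ I ∧ ∀ J ∈ 𝒮, s ∈ J → I ⊆ J then h.choose else ∅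


/-!
Every member `I` of a nested collection has a root, an element `r` with `S_r = I`, so a nested
collection has at most `|S|` members and one with `|S|` members is maximal. In a maximal
collection the root is unique: two roots `x ≠ y` of `I` would allow adding `(I − y) ⊕ x`, because
the members strictly inside `I` avoid `y` and hence lie in that component or are disjoint from
it. So a maximal collection has exactly `|S|` members.

Removing `A = S_s` leaves `B = S_{s⁺}` with `s` as a second root, so `(B − s) ⊕ s⁺` can be added
by the same argument, and counting makes `μ_s(𝒮)` maximal. If a maximal `𝒯` contains every
`S_r` with `r ≠ s`, the root of `B` in `𝒯` is `s` or `s⁺`. If it is `s`, the components of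
`B − s` are members of `𝒯`, so `μ_s(𝒮) ⊆ 𝒯`; if it is `s⁺`, then `A`, the component of `B − s⁺`
containing `s`, is a member of `𝒯`, so `𝒮 ⊆ 𝒯`.
-/

section

open Finset

variable {n : ℕ} {E : Fin n → Fin n → Prop}

section StronglyConnectedComponents

variable {U U' I : Finset (Fin n)} {a b x y z : Fin n}

theorem ReachIn.mono (h : U ⊆ U') (hab : ReachIn E U a b) : ReachIn E U' a b :=
  Relation.ReflTransGen.mono (r := fun x y => E x y ∧ x ∈ U ∧ y ∈ U)
    (p := fun x y => E x y ∧ x ∈ U' ∧ y ∈ U') (fun _ _ hxy => ⟨hxy.1, h hxy.2.1, h hxy.2.2⟩) _ _ hab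

theorem mem_scc : y ∈ scc E U x ↔ y ∈ U ∧ ReachIn E U x y ∧ ReachIn E U y x := by
  classical
  simp only [scc, mem_filter]

theorem scc_subset : scc E U x ⊆ U := fun _ hy => (mem_scc.1 hy).1

theorem self_mem_scc (hx : x ∈ U) : x ∈ scc E U x := mem_scc.2 ⟨hx, .refl, .refl⟩

theorem scc_mono (h : U ⊆ U') : scc E U x ⊆ scc E U' x := fun _ hy =>
  let ⟨hyU, hxy, hyx⟩ := mem_scc.1 hy
  mem_scc.2 ⟨h hyU, hxy.mono h, hyx.mono h⟩

theorem scc_eq_of_mem (hy : y ∈ scc E U x) : scc E U y = scc E U x := by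
  obtain ⟨-, hxy, hyx⟩ := mem_scc.1 hy
  ext z
  simp only [mem_scc]
  exact ⟨fun ⟨hz, h1, h2⟩ => ⟨hz, hxy.trans h1, h2.trans hyx⟩,
    fun ⟨hz, h1, h2⟩ => ⟨hz, hyx.trans h1, h2.trans hxy⟩⟩

theorem ReachIn.scc (hab : ReachIn E U a b) (hxa : ReachIn E U x a) (hbx : ReachIn E U b x) :
    ReachIn E (scc E U x) a b := by
  induction hab using Relation.ReflTransGen.head_induction_on with
  | refl => exact .refl
  | head hac hcb ih =>
    have hac' : ReachIn E U _ _ := .single hac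
    exact .head ⟨hac.1, mem_scc.2 ⟨hac.2.1, hxa, hac'.trans (hcb.trans hbx)⟩,
      mem_scc.2 ⟨hac.2.2, hxa.trans hac', hcb.trans hbx⟩⟩ (ih (hxa.trans hac'))

theorem scc_stronglyConnected (hx : x ∈ U) : StronglyConnected E (scc E U x) := by
  refine ⟨⟨x, self_mem_scc hx⟩, fun a ha b hb => ?_⟩
  obtain ⟨-, hxa, hax⟩ := mem_scc.1 ha
  obtain ⟨-, hxb, hbx⟩ := mem_scc.1 hb
  exact ReachIn.scc (hax.trans hxb) hxa hbx

theorem StronglyConnected.subset_scc (hI : StronglyConnected E I) (hIU : I ⊆ U) (hx : x ∈ I) :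
    I ⊆ scc E U x := fun _ hy =>
  mem_scc.2 ⟨hIU hy, (hI.2 x hx _ hy).mono hIU, (hI.2 _ hy x hx).mono hIU⟩

theorem StronglyConnected.scc_eq_of_subset (hI : StronglyConnected E I) (hIU : I ⊆ U)
    (hx : x ∈ I) (h : scc E U x ⊆ I) : scc E U x = I :=
  subset_antisymm h (hI.subset_scc hIU hx)

theorem StronglyConnected.scc_eq (hI : StronglyConnected E I) (hx : x ∈ I) : scc E I x = I :=
  hI.scc_eq_of_subset subset_rfl hx scc_subset

theorem scc_subset_scc_of_subset (hx : x ∈ U) (h : scc E U x ⊆ U') :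
    scc E U x ⊆ scc E U' x :=
  (scc_stronglyConnected hx).subset_scc h (self_mem_scc hx)

theorem scc_union_subset_scc_right {X W : Finset (Fin n)} (hXW : Disjoint X W)
    (hX : ∀ y ∈ X, scc E (X ∪ W) y ⊆ X) (hz : z ∈ W) : scc E (X ∪ W) z ⊆ scc E W z := by
  refine scc_subset_scc_of_subset (mem_union_right X hz) fun y hy => ?_
  refine (mem_union.1 (scc_subset hy)).resolve_left fun hyX => disjoint_left.1 hXW ?_ hz
  have hzy : z ∈ scc E (X ∪ W) y := by
    rw [scc_eq_of_mem hy]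
    exact self_mem_scc (mem_union_right X hz)
  exact hX y hyX hzy

theorem oplus_of_mem (hx : x ∈ U) : oplus E U x = scc E U x := by
  rw [oplus, insert_eq_of_mem hx]

theorem notMem_oplus_erase (hxy : x ≠ y) : y ∉ oplus E (U.erase y) x := fun hy =>
  (mem_insert.1 (scc_subset hy)).elim (fun h => hxy h.symm) (notMem_erase y U)

end StronglyConnectedComponents

section NestedCollections

variable {𝒮 𝒯 : Finset (Finset (Fin n))} {I J K B : Finset (Fin n)} {s x y z : Fin n}

theorem Nested.subset (h : Nested E 𝒮) (h𝒯 : 𝒯 ⊆ 𝒮) : Nested E 𝒯 :=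
  ⟨fun I hI => h.1 I (h𝒯 hI), fun I hI J hJ => h.2.1 I (h𝒯 hI) J (h𝒯 hJ),
    fun 𝒰 h𝒰 => h.2.2 𝒰 (h𝒰.trans h𝒯)⟩

theorem mem_nsupport : x ∈ nsupport 𝒮 ↔ ∃ I ∈ 𝒮, x ∈ I := by
  simp [nsupport, mem_sup]

theorem subset_nsupport (hI : I ∈ 𝒮) : I ⊆ nsupport 𝒮 := fun _ hx => mem_nsupport.2 ⟨I, hI, hx⟩

theorem nsupport_insert_of_subset (hI : I ⊆ nsupport 𝒮) : nsupport (insert I 𝒮) = nsupport 𝒮 := by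
  classical
  rw [nsupport, sup_insert]
  exact sup_eq_right.2 hI

theorem nsupport_erase (hI : I ∈ 𝒮) (h : I ⊆ nsupport (𝒮.erase I)) :
    nsupport (𝒮.erase I) = nsupport 𝒮 := by
  classical
  rw [← nsupport_insert_of_subset h, insert_erase hI]

theorem Nested.minMem_spec (h : Nested E 𝒮) (hs : s ∈ nsupport 𝒮) :
    minMem 𝒮 s ∈ 𝒮 ∧ s ∈ minMem 𝒮 s ∧ ∀ J ∈ 𝒮, s ∈ J → minMem 𝒮 s ⊆ J := by
  classical
  have hne : (𝒮.filter (s ∈ ·)).Nonempty := by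
    obtain ⟨I, hI, hsI⟩ := mem_nsupport.1 hs
    exact ⟨I, mem_filter.2 ⟨hI, hsI⟩⟩
  obtain ⟨I, hImin⟩ := exists_minimal hne
  obtain ⟨hI, hsI⟩ := mem_filter.1 hImin.prop
  have hex : ∃ I ∈ 𝒮, s ∈ I ∧ ∀ J ∈ 𝒮, s ∈ J → I ⊆ J := by
    refine ⟨I, hI, hsI, fun J hJ hsJ => ?_⟩
    rcases h.2.1 I hI J hJ with hIJ | hJI | hdisj
    · exact hIJ
    · exact (hImin.eq_of_le (mem_filter.2 ⟨hJ, hsJ⟩) hJI).symm.subset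
    · exact absurd hsJ (disjoint_left.1 hdisj hsI)
  rw [minMem, dif_pos hex]
  exact hex.choose_spec

open Classical in
noncomputable def innerUnion (𝒮 : Finset (Finset (Fin n))) (I : Finset (Fin n)) :
    Finset (Fin n) :=
  (𝒮.filter (· ⊂ I)).sup id

theorem mem_innerUnion : x ∈ innerUnion 𝒮 I ↔ ∃ K ∈ 𝒮, K ⊂ I ∧ x ∈ K := by
  classical
  simp [innerUnion, mem_sup, and_assoc]

theorem innerUnion_subset : innerUnion 𝒮 I ⊆ I := fun _ hx =>
  let ⟨_, _, hKI, hxK⟩ := mem_innerUnion.1 hx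
  hKI.subset hxK

theorem subset_erase_of_ssubset (hs : s ∉ innerUnion 𝒮 B) (hK : K ∈ 𝒮) (hKB : K ⊂ B) :
    K ⊆ B.erase s :=
  subset_erase.2 ⟨hKB.subset, fun hsK => hs (mem_innerUnion.2 ⟨K, hK, hKB, hsK⟩)⟩

/-- The maximal members strictly inside `I` are disjoint with union `innerUnion 𝒮 I`, so by
nestedness they are the strongly connected components of that union. -/
theorem Nested.scc_innerUnion (h : Nested E 𝒮) (hx : x ∈ innerUnion 𝒮 I) :
    scc E (innerUnion 𝒮 I) x ∈ 𝒮 ∧ scc E (innerUnion 𝒮 I) x ⊂ I := by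
  classical
  set F := 𝒮.filter (· ⊂ I)
  set 𝒯 := F.filter (Maximal (· ∈ F))
  have hF : F ⊆ 𝒮 := filter_subset _ _
  obtain ⟨K, hKF, hxK⟩ := mem_sup.1 hx
  obtain ⟨M, hKM, hM⟩ := F.exists_le_maximal hKF
  have hdisj : ∀ L ∈ 𝒯, ∀ L' ∈ 𝒯, L ≠ L' → Disjoint L L' := by
    intro L hL L' hL' hne
    have hLmax := (mem_filter.1 hL).2
    have hL'max := (mem_filter.1 hL').2
    rcases h.2.1 L (hF hLmax.prop) L' (hF hL'max.prop) with hLL' | hL'L | hdisj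
    · exact absurd (hLmax.eq_of_le hL'max.prop hLL') hne
    · exact absurd (hL'max.eq_of_le hLmax.prop hL'L).symm hne
    · exact hdisj
  have hsup : 𝒯.sup id = innerUnion 𝒮 I := by
    refine subset_antisymm (sup_mono (filter_subset _ _)) fun y hy => ?_
    obtain ⟨L, hLF, hyL⟩ := mem_sup.1 hy
    obtain ⟨M', hLM', hM'⟩ := F.exists_le_maximal hLF
    exact mem_sup.2 ⟨M', mem_filter.2 ⟨hM'.prop, hM'⟩, hLM' hyL⟩
  have hscc := h.2.2 𝒯 ((filter_subset _ _).trans hF) hdisj M (mem_filter.2 ⟨hM.prop, hM⟩) x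
    (hKM hxK)
  rw [hsup] at hscc
  rw [hscc]
  exact mem_filter.1 hM.prop

theorem Nested.innerUnion_ssubset (h : Nested E 𝒮) (hI : I ∈ 𝒮) : innerUnion 𝒮 I ⊂ I := by
  refine lt_of_le_of_ne innerUnion_subset fun heq => ?_
  obtain ⟨x, hx⟩ := (h.1 I hI).1
  have hx' : x ∈ innerUnion 𝒮 I := by rwa [heq]
  have hlt := (h.scc_innerUnion hx').2
  rw [heq, (h.1 I hI).scc_eq hx] at hlt
  exact ssubset_irrefl I hlt

theorem Nested.notMem_innerUnion_iff (h : Nested E 𝒮) (hI : I ∈ 𝒮) (hx : x ∈ I) :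
    x ∉ innerUnion 𝒮 I ↔ minMem 𝒮 x = I := by
  obtain ⟨hmem, hxmem, hmin⟩ := h.minMem_spec (subset_nsupport hI hx)
  constructor
  · intro hnot
    by_contra hne
    exact hnot (mem_innerUnion.2 ⟨_, hmem, lt_of_le_of_ne (hmin I hI hx) hne, hxmem⟩)
  · rintro rfl hx'
    obtain ⟨K, hK, hKI, hxK⟩ := mem_innerUnion.1 hx'
    exact hKI.not_subset (hmin K hK hxK)

theorem Nested.exists_minMem_eq (h : Nested E 𝒮) (hI : I ∈ 𝒮) : ∃ r ∈ I, minMem 𝒮 r = I := by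
  obtain ⟨r, hrI, hr⟩ := exists_of_ssubset (h.innerUnion_ssubset hI)
  exact ⟨r, hrI, (h.notMem_innerUnion_iff hI hrI).1 hr⟩

theorem Nested.erase_minMem_subset (h : Nested E 𝒮)
    (hmem : ∀ r ∈ nsupport 𝒮, r ≠ s → minMem 𝒮 r ∈ 𝒯) : 𝒮.erase (minMem 𝒮 s) ⊆ 𝒯 := by
  intro I hI
  obtain ⟨hIs, hI⟩ := mem_erase.1 hI
  obtain ⟨r, hrI, hr⟩ := h.exists_minMem_eq hI
  refine hr ▸ hmem r (subset_nsupport hI hrI) ?_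
  rintro rfl
  exact hIs hr.symm

theorem Nested.card_le_card_nsupport (h : Nested E 𝒮) : #𝒮 ≤ #(nsupport 𝒮) :=
  card_le_card_of_surjOn (minMem 𝒮) fun _ hI =>
    let ⟨r, hrI, hr⟩ := h.exists_minMem_eq hI
    ⟨r, subset_nsupport hI hrI, hr⟩

theorem Nested.eq_of_subset_of_card_nsupport_le (h : Nested E 𝒯) (h𝒮𝒯 : 𝒮 ⊆ 𝒯)
    (hcard : #(nsupport 𝒯) ≤ #𝒮) : 𝒮 = 𝒯 :=
  eq_of_subset_of_card_le h𝒮𝒯 (h.card_le_card_nsupport.trans hcard)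

theorem Nested.maximalNested (h : Nested E 𝒮) (hcard : #(nsupport 𝒮) ≤ #𝒮) :
    MaximalNested E 𝒮 :=
  ⟨h, fun _ h' hsupp hsub => (h'.eq_of_subset_of_card_nsupport_le hsub (hsupp ▸ hcard)).symm⟩

end NestedCollections

section InsertComponent

variable {𝒮 𝒯 : Finset (Finset (Fin n))} {I J B : Finset (Fin n)} {s x z : Fin n}

theorem Nested.subset_erase_or_disjoint (h : Nested E 𝒮) (hB : B ∈ 𝒮)
    (hs : s ∉ innerUnion 𝒮 B) (hJ : J ∈ 𝒮) (hx : x ∈ B) (hxJ : x ∉ J) :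
    J ⊆ B.erase s ∨ Disjoint J B := by
  rcases h.2.1 J hJ B hB with hJB | hBJ | hdisj
  · refine Or.inl (subset_erase_of_ssubset hs hJ (lt_of_le_of_ne hJB ?_))
    rintro rfl
    exact hxJ hx
  · exact absurd (hBJ hx) hxJ
  · exact Or.inr hdisj

theorem Nested.scc_erase_comparable (h : Nested E 𝒮) (hB : B ∈ 𝒮) (hs : s ∉ innerUnion 𝒮 B)
    (hI : I ∈ 𝒮) :
    scc E (B.erase s) x ⊆ I ∨ I ⊆ scc E (B.erase s) x ∨ Disjoint (scc E (B.erase s) x) I := by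
  rcases h.2.1 I hI B hB with hIB | hBI | hdisj
  · rcases eq_or_ne I B with rfl | hne
    · exact Or.inl (scc_subset.trans (erase_subset s I))
    by_cases hd : Disjoint (scc E (B.erase s) x) I
    · exact Or.inr (Or.inr hd)
    obtain ⟨z, hzX, hzI⟩ := not_disjoint_iff.1 hd
    rw [← scc_eq_of_mem hzX]
    exact Or.inr (Or.inl ((h.1 I hI).subset_scc
      (subset_erase_of_ssubset hs hI (lt_of_le_of_ne hIB hne)) hzI))
  · exact Or.inl ((scc_subset.trans (erase_subset s B)).trans hBI)
  · exact Or.inr (Or.inr (hdisj.symm.mono_left (scc_subset.trans (erase_subset s B))))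

/-- Inside `B ∪ ⋃ {J ∈ 𝒯 | J ∩ B = ∅}` the component of `z` is `B`; the members of `𝒯` that meet
`B` lie in `B − s`, so the component of `z` in the smaller union lies in `B − s`. -/
theorem Nested.scc_union_subset_scc_erase (h : Nested E 𝒮) (hB : B ∈ 𝒮)
    (hs : s ∉ innerUnion 𝒮 B) (h𝒯 : 𝒯 ⊆ 𝒮)
    (hdisj : (𝒯 : Set (Finset (Fin n))).PairwiseDisjoint id)
    (hX𝒯 : ∀ J ∈ 𝒯, Disjoint (scc E (B.erase s) x) J) (hz : z ∈ scc E (B.erase s) x) :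
    scc E (scc E (B.erase s) x ∪ 𝒯.sup id) z ⊆ scc E (B.erase s) x := by
  classical
  set X := scc E (B.erase s) x
  set V := X ∪ 𝒯.sup id
  have hzB : z ∈ B := erase_subset s B (scc_subset hz)
  have hcase : ∀ J ∈ 𝒯, J ⊆ B.erase s ∨ Disjoint J B := fun J hJ =>
    h.subset_erase_or_disjoint hB hs (h𝒯 hJ) hzB (disjoint_left.1 (hX𝒯 J hJ) hz)
  set 𝒟 := insert B (𝒯.filter (Disjoint · B))
  have h𝒟 : 𝒟 ⊆ 𝒮 := insert_subset hB ((filter_subset _ _).trans h𝒯)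
  have hdisj𝒟 : (𝒟 : Set (Finset (Fin n))).PairwiseDisjoint id := by
    rw [coe_insert]
    exact (hdisj.subset (coe_subset.2 (filter_subset _ _))).insert fun J hJ _ => (mem_filter.1 hJ).2.symm
  have hV𝒟 : V ⊆ 𝒟.sup id := by
    intro y hy
    rw [sup_insert, sup_eq_union, mem_union]
    rcases mem_union.1 hy with hyX | hyW
    · exact Or.inl (erase_subset s B (scc_subset hyX))
    obtain ⟨J, hJ, hyJ⟩ := mem_sup.1 hyW
    rcases hcase J hJ with hJB | hJB
    · exact Or.inl (erase_subset s B (hJB hyJ))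
    · exact Or.inr (mem_sup.2 ⟨J, mem_filter.2 ⟨hJ, hJB⟩, hyJ⟩)
  have hVB : ∀ y ∈ V, y ∈ B → y ∈ B.erase s := by
    intro y hy hyB
    rcases mem_union.1 hy with hyX | hyW
    · exact scc_subset hyX
    obtain ⟨J, hJ, hyJ⟩ := mem_sup.1 hyW
    exact (hcase J hJ).elim (· hyJ) fun hJB => absurd hyB (disjoint_left.1 hJB hyJ)
  have hsccB : scc E (𝒟.sup id) z = B :=
    h.2.2 𝒟 h𝒟 (fun I hI J hJ hne => hdisj𝒟 hI hJ hne) B (mem_insert_self _ _) z hzB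
  have hsub : scc E V z ⊆ B.erase s := fun y hy =>
    hVB y (scc_subset hy) (hsccB ▸ scc_mono hV𝒟 hy)
  exact (scc_subset_scc_of_subset (mem_union_left _ hz) hsub).trans (scc_eq_of_mem hz).subset

theorem Nested.scc_sup_insert_scc_erase (h : Nested E 𝒮) (hB : B ∈ 𝒮)
    (hs : s ∉ innerUnion 𝒮 B) (hx : x ∈ B.erase s) (h𝒯 : 𝒯 ⊆ 𝒮)
    (hdisj : (𝒯 : Set (Finset (Fin n))).PairwiseDisjoint id)
    (hX𝒯 : ∀ J ∈ 𝒯, Disjoint (scc E (B.erase s) x) J)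
    (hI : I ∈ insert (scc E (B.erase s) x) 𝒯) (hz : z ∈ I) :
    scc E ((insert (scc E (B.erase s) x) 𝒯).sup id) z = I := by
  classical
  set X := scc E (B.erase s) x
  have hXV : ∀ y ∈ X, scc E (X ∪ 𝒯.sup id) y ⊆ X := fun y hy =>
    h.scc_union_subset_scc_erase hB hs h𝒯 hdisj hX𝒯 hy
  simp only [sup_insert, sup_eq_union, id_eq]
  rcases mem_insert.1 hI with rfl | hI
  · exact (scc_stronglyConnected hx).scc_eq_of_subset subset_union_left hz (hXV z hz)
  have hzW : z ∈ 𝒯.sup id := mem_sup.2 ⟨I, hI, hz⟩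
  have hW : scc E (𝒯.sup id) z = I :=
    h.2.2 𝒯 h𝒯 (fun I hI J hJ hne => hdisj hI hJ hne) I hI z hz
  refine (h.1 I (h𝒯 hI)).scc_eq_of_subset ((le_sup (f := id) hI).trans subset_union_right) hz ?_
  exact hW ▸ scc_union_subset_scc_right (Finset.disjoint_sup_right.2 hX𝒯) hXV hzW

theorem Nested.insert_scc_erase (h : Nested E 𝒮) (hB : B ∈ 𝒮) (hs : s ∉ innerUnion 𝒮 B)
    (hx : x ∈ B.erase s) : Nested E (insert (scc E (B.erase s) x) 𝒮) := by
  classical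
  set X := scc E (B.erase s) x
  refine ⟨(forall_mem_insert _ _ _).2 ⟨scc_stronglyConnected hx, h.1⟩, ?_, ?_⟩
  · intro I hI J hJ
    rcases mem_insert.1 hI with rfl | hI <;> rcases mem_insert.1 hJ with rfl | hJ
    · exact Or.inl subset_rfl
    · exact h.scc_erase_comparable hB hs hJ
    · rcases h.scc_erase_comparable hB hs hI (x := x) with hXI | hIX | hdisj
      exacts [Or.inr (Or.inl hXI), Or.inl hIX, Or.inr (Or.inr hdisj.symm)]
    · exact h.2.1 I hI J hJ
  · intro 𝒯 h𝒯 hdisj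
    by_cases hX : X ∈ 𝒯
    · rw [← insert_erase hX]
      exact fun I hI z hz => h.scc_sup_insert_scc_erase hB hs hx (subset_insert_iff.1 h𝒯)
        (fun I hI J hJ hne => hdisj I (mem_of_mem_erase hI) J (mem_of_mem_erase hJ) hne)
        (fun J hJ => hdisj X hX J (mem_of_mem_erase hJ) (ne_of_mem_erase hJ).symm) hI hz
    · exact h.2.2 𝒯 (fun J hJ => (mem_insert.1 (h𝒯 hJ)).resolve_left (ne_of_mem_of_not_mem hJ hX))
        hdisj

end InsertComponent

section MaximalNestedCollections

variable {𝒮 𝒯 : Finset (Finset (Fin n))} {r s j x y : Fin n}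

theorem MaximalNested.minMem_injOn (h : MaximalNested E 𝒮) :
    Set.InjOn (minMem 𝒮) (nsupport 𝒮) := by
  intro x hx y hy hxy
  by_contra hne
  obtain ⟨hI, hxI, hImin⟩ := h.1.minMem_spec hx
  have hyI : y ∈ minMem 𝒮 x := hxy ▸ (h.1.minMem_spec hy).2.1
  have hyroot : y ∉ innerUnion 𝒮 (minMem 𝒮 x) := (h.1.notMem_innerUnion_iff hI hyI).2 hxy.symm
  have hxe : x ∈ (minMem 𝒮 x).erase y := mem_erase.2 ⟨hne, hxI⟩
  set X := scc E ((minMem 𝒮 x).erase y) x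
  have hsupp : nsupport (insert X 𝒮) = nsupport 𝒮 :=
    nsupport_insert_of_subset ((scc_subset.trans (erase_subset _ _)).trans (subset_nsupport hI))
  have hX : X ∈ 𝒮 :=
    h.2 _ (h.1.insert_scc_erase hI hyroot hxe) hsupp (subset_insert _ _) ▸ mem_insert_self X 𝒮
  exact notMem_erase y _ (scc_subset (hImin X hX (self_mem_scc hxe) hyI))

theorem MaximalNested.card_eq (h : MaximalNested E 𝒮) : #𝒮 = #(nsupport 𝒮) :=
  h.1.card_le_card_nsupport.antisymm
    (card_le_card_of_injOn (minMem 𝒮) (fun _ hx => (h.1.minMem_spec hx).1) h.minMem_injOn)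

theorem MaximalNested.innerUnion_minMem (h : MaximalNested E 𝒮) (hx : x ∈ nsupport 𝒮) :
    innerUnion 𝒮 (minMem 𝒮 x) = (minMem 𝒮 x).erase x := by
  obtain ⟨hI, hxI, -⟩ := h.1.minMem_spec hx
  ext y
  rw [mem_erase]
  refine ⟨fun hy => ⟨?_, innerUnion_subset hy⟩, fun ⟨hyx, hyI⟩ => ?_⟩
  · rintro rfl
    exact (h.1.notMem_innerUnion_iff hI hxI).2 rfl hy
  · by_contra hy
    exact hyx (h.minMem_injOn (subset_nsupport hI hyI) hx
      ((h.1.notMem_innerUnion_iff hI hyI).1 hy))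

theorem MaximalNested.scc_erase_minMem (h : MaximalNested E 𝒮) (hx : x ∈ nsupport 𝒮)
    (hy : y ∈ (minMem 𝒮 x).erase x) :
    scc E ((minMem 𝒮 x).erase x) y ∈ 𝒮 ∧ scc E ((minMem 𝒮 x).erase x) y ⊂ minMem 𝒮 x := by
  rw [← h.innerUnion_minMem hx] at hy ⊢
  exact h.1.scc_innerUnion hy

theorem MaximalNested.eq_or_eq_of_minMem_eq (h : MaximalNested E 𝒮) (h𝒯 : Nested E 𝒯)
    (hsupp : nsupport 𝒯 = nsupport 𝒮) (hmem : ∀ r ∈ nsupport 𝒮, r ≠ s → minMem 𝒮 r ∈ 𝒯)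
    (hj : j ∈ nsupport 𝒮) (hr : r ∈ minMem 𝒮 j) (hr𝒯 : minMem 𝒯 r = minMem 𝒮 j) :
    r = s ∨ r = j := by
  obtain ⟨hB, -, -⟩ := h.1.minMem_spec hj
  have hrS : r ∈ nsupport 𝒮 := subset_nsupport hB hr
  obtain ⟨-, hrr, hrmin⟩ := h.1.minMem_spec hrS
  refine or_iff_not_imp_left.2 fun hrs => h.minMem_injOn hrS hj (subset_antisymm (hrmin _ hB hr) ?_)
  exact hr𝒯 ▸ (h𝒯.minMem_spec (hsupp ▸ hrS)).2.2 _ (hmem r hrS hrs) hrr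

end MaximalNestedCollections

/-- `MinMemCovBy 𝒮 s j` says that `j = s⁺` in the paper's notation. -/
def MinMemCovBy (𝒮 : Finset (Finset (Fin n))) (s j : Fin n) : Prop :=
  minMem 𝒮 s ⊂ minMem 𝒮 j ∧ ∀ J ∈ 𝒮, minMem 𝒮 s ⊂ J → minMem 𝒮 j ⊆ J

noncomputable def internalMutation (E : Fin n → Fin n → Prop) (𝒮 : Finset (Finset (Fin n)))
    (s j : Fin n) : Finset (Finset (Fin n)) :=
  insert (oplus E ((minMem 𝒮 j).erase s) j) (𝒮.erase (minMem 𝒮 s))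

namespace MinMemCovBy

variable {𝒮 𝒯 : Finset (Finset (Fin n))} {s j : Fin n}

theorem ne (hsj : MinMemCovBy 𝒮 s j) : s ≠ j := by
  rintro rfl
  exact ssubset_irrefl _ hsj.1

theorem mem_minMem_erase (hsj : MinMemCovBy 𝒮 s j) (h : Nested E 𝒮) (hj : j ∈ nsupport 𝒮) :
    j ∈ (minMem 𝒮 j).erase s :=
  mem_erase.2 ⟨hsj.ne.symm, (h.minMem_spec hj).2.1⟩

theorem minMem_mem_erase (hsj : MinMemCovBy 𝒮 s j) (h : Nested E 𝒮) (hj : j ∈ nsupport 𝒮) :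
    minMem 𝒮 j ∈ 𝒮.erase (minMem 𝒮 s) :=
  mem_erase.2 ⟨hsj.1.ne', (h.minMem_spec hj).1⟩

theorem notMem_innerUnion_erase (hsj : MinMemCovBy 𝒮 s j) (h : Nested E 𝒮)
    (hs : s ∈ nsupport 𝒮) : s ∉ innerUnion (𝒮.erase (minMem 𝒮 s)) (minMem 𝒮 j) := fun hsU => by
  obtain ⟨K, hK, hKB, hsK⟩ := mem_innerUnion.1 hsU
  obtain ⟨hKA, hK⟩ := mem_erase.1 hK
  have hAK : minMem 𝒮 s ⊂ K := lt_of_le_of_ne ((h.minMem_spec hs).2.2 K hK hsK) (Ne.symm hKA)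
  exact hKB.not_subset (hsj.2 K hK hAK)

theorem oplus_notMem (hsj : MinMemCovBy 𝒮 s j) (h : Nested E 𝒮) (hs : s ∈ nsupport 𝒮)
    (hj : j ∈ nsupport 𝒮) : oplus E ((minMem 𝒮 j).erase s) j ∉ 𝒮 := fun hN =>
  notMem_oplus_erase hsj.ne.symm ((h.minMem_spec hj).2.2 _ hN (self_mem_scc (mem_insert_self _ _))
    (hsj.1.subset (h.minMem_spec hs).2.1))

theorem nsupport_internalMutation (hsj : MinMemCovBy 𝒮 s j) (h : Nested E 𝒮)
    (hs : s ∈ nsupport 𝒮) (hj : j ∈ nsupport 𝒮) :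
    nsupport (internalMutation E 𝒮 s j) = nsupport 𝒮 := by
  have hB := subset_nsupport (hsj.minMem_mem_erase h hj)
  rw [internalMutation, nsupport_insert_of_subset,
    nsupport_erase (h.minMem_spec hs).1 (hsj.1.subset.trans hB)]
  exact (scc_subset.trans (insert_subset (h.minMem_spec hj).2.1 (erase_subset _ _))).trans hB

theorem card_internalMutation (hsj : MinMemCovBy 𝒮 s j) (h : Nested E 𝒮)
    (hs : s ∈ nsupport 𝒮) (hj : j ∈ nsupport 𝒮) : #(internalMutation E 𝒮 s j) = #𝒮 := by
  rw [internalMutation,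
    card_insert_of_notMem fun hN => hsj.oplus_notMem h hs hj (mem_of_mem_erase hN),
    card_erase_add_one (h.minMem_spec hs).1]

theorem internalMutation_ne (hsj : MinMemCovBy 𝒮 s j) (h : Nested E 𝒮) (hs : s ∈ nsupport 𝒮) :
    internalMutation E 𝒮 s j ≠ 𝒮 := fun heq => by
  obtain ⟨hA, hsA, -⟩ := h.minMem_spec hs
  have hA' : minMem 𝒮 s ∈ internalMutation E 𝒮 s j := by rwa [heq]
  rcases mem_insert.1 hA' with hAN | hA
  · exact notMem_oplus_erase hsj.ne.symm (hAN ▸ hsA)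
  · exact notMem_erase _ _ hA

theorem maximalNested_internalMutation (hsj : MinMemCovBy 𝒮 s j) (h : MaximalNested E 𝒮)
    (hs : s ∈ nsupport 𝒮) (hj : j ∈ nsupport 𝒮) : MaximalNested E (internalMutation E 𝒮 s j) := by
  have hN : Nested E (internalMutation E 𝒮 s j) := by
    rw [internalMutation, oplus_of_mem (hsj.mem_minMem_erase h.1 hj)]
    exact (h.1.subset (erase_subset _ _)).insert_scc_erase (hsj.minMem_mem_erase h.1 hj)
      (hsj.notMem_innerUnion_erase h.1 hs) (hsj.mem_minMem_erase h.1 hj)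
  refine hN.maximalNested ?_
  rw [hsj.nsupport_internalMutation h.1 hs hj, hsj.card_internalMutation h.1 hs hj, h.card_eq]

theorem minMem_eq_scc (hsj : MinMemCovBy 𝒮 s j) (h : MaximalNested E 𝒮) (hs : s ∈ nsupport 𝒮)
    (hj : j ∈ nsupport 𝒮) : minMem 𝒮 s = scc E ((minMem 𝒮 j).erase j) s := by
  obtain ⟨-, hsA, hAmin⟩ := h.1.minMem_spec hs
  have hsB : s ∈ (minMem 𝒮 j).erase j := mem_erase.2 ⟨hsj.ne, hsj.1.subset hsA⟩
  obtain ⟨hY, hYB⟩ := h.scc_erase_minMem hj hsB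
  by_contra hne
  exact hYB.not_subset (hsj.2 _ hY (lt_of_le_of_ne (hAmin _ hY (self_mem_scc hsB)) hne))

theorem eq_internalMutation (hsj : MinMemCovBy 𝒮 s j) (h : MaximalNested E 𝒮)
    (hs : s ∈ nsupport 𝒮) (hj : j ∈ nsupport 𝒮) (h𝒯 : MaximalNested E 𝒯)
    (hsupp : nsupport 𝒯 = nsupport 𝒮) (hne : 𝒯 ≠ 𝒮)
    (hmem : ∀ r ∈ nsupport 𝒮, r ≠ s → minMem 𝒮 r ∈ 𝒯) : 𝒯 = internalMutation E 𝒮 s j := by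
  have h𝒮₀ : 𝒮.erase (minMem 𝒮 s) ⊆ 𝒯 := h.1.erase_minMem_subset hmem
  have hjB := hsj.mem_minMem_erase h.1 hj
  have hcard : #(nsupport 𝒯) ≤ #(internalMutation E 𝒮 s j) := by
    rw [hsupp, hsj.card_internalMutation h.1 hs hj, h.card_eq]
  obtain ⟨r, hrB, hr⟩ := h𝒯.1.exists_minMem_eq (h𝒮₀ (hsj.minMem_mem_erase h.1 hj))
  rcases h.eq_or_eq_of_minMem_eq h𝒯.1 hsupp hmem hj hrB hr with rfl | rfl
  · have hN := (h𝒯.scc_erase_minMem (hsupp ▸ hs) (hr ▸ hjB)).1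
    rw [hr, ← oplus_of_mem hjB] at hN
    exact (h𝒯.1.eq_of_subset_of_card_nsupport_le (insert_subset hN h𝒮₀) hcard).symm
  · have hA : minMem 𝒮 s ∈ 𝒯 := by
      rw [hsj.minMem_eq_scc h hs hj, ← hr]
      refine (h𝒯.scc_erase_minMem (hsupp ▸ hj) ?_).1
      rw [hr]
      exact mem_erase.2 ⟨hsj.ne, hsj.1.subset (h.1.minMem_spec hs).2.1⟩
    refine absurd (h𝒯.1.eq_of_subset_of_card_nsupport_le ?_ ?_) hne.symm
    · exact insert_erase (h.1.minMem_spec hs).1 ▸ insert_subset hA h𝒮₀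
    · rw [hsupp, h.card_eq]

end MinMemCovBy

end

theorem stmt4_general (n : ℕ) (E : Fin n → Fin n → Prop)
    (𝒮 : Finset (Finset (Fin n))) (h𝒮 : MaximalNested E 𝒮)
    (s j : Fin n) (hs : s ∈ nsupport 𝒮) (hj : j ∈ nsupport 𝒮)
    (hlt : minMem 𝒮 s ⊂ minMem 𝒮 j)
    (hcov : ∀ J ∈ 𝒮, minMem 𝒮 s ⊂ J → minMem 𝒮 j ⊆ J) :
    MaximalNested E (insert (oplus E ((minMem 𝒮 j).erase s) j) (𝒮.erase (minMem 𝒮 s))) ∧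
    nsupport (insert (oplus E ((minMem 𝒮 j).erase s) j) (𝒮.erase (minMem 𝒮 s)))
      = nsupport 𝒮 ∧
    insert (oplus E ((minMem 𝒮 j).erase s) j) (𝒮.erase (minMem 𝒮 s)) ≠ 𝒮 ∧
    (∀ 𝒯 : Finset (Finset (Fin n)), MaximalNested E 𝒯 → nsupport 𝒯 = nsupport 𝒮 →
      𝒯 ≠ 𝒮 → (∀ r ∈ nsupport 𝒮, r ≠ s → minMem 𝒮 r ∈ 𝒯) →
      𝒯 = insert (oplus E ((minMem 𝒮 j).erase s) j) (𝒮.erase (minMem 𝒮 s))) := by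
  have hsj : MinMemCovBy 𝒮 s j := ⟨hlt, hcov⟩
  exact ⟨hsj.maximalNested_internalMutation h𝒮 hs hj, hsj.nsupport_internalMutation h𝒮.1 hs hj,
    hsj.internalMutation_ne h𝒮.1 hs, fun 𝒯 h𝒯 hsupp hne hmem =>
      hsj.eq_internalMutation h𝒮 hs hj h𝒯 hsupp hne hmem⟩

/-- Internal mutation: let `s` be a non-maximal element of the support of a maximal nested
collection `𝒮` and let `j = s⁺` (so `S_j` is the smallest member strictly containing `S_s`).
Then `μ_s(𝒮)`, obtained from `𝒮` by removing `S_s` and adding `(S_{s⁺} − {s}) ⊕ s⁺`, is a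
maximal nested collection with the same support, and it is the unique maximal nested
collection with that support, other than `𝒮`, containing all members `S_r` with `r ≠ s`. -/
theorem stmt4 (n : ℕ) (E : Fin n → Fin n → Prop) (hE : ∀ i, ¬ E i i)
    (𝒮 : Finset (Finset (Fin n))) (h𝒮 : MaximalNested E 𝒮)
    (s j : Fin n) (hs : s ∈ nsupport 𝒮) (hj : j ∈ nsupport 𝒮)
    (hlt : minMem 𝒮 s ⊂ minMem 𝒮 j)
    (hcov : ∀ J ∈ 𝒮, minMem 𝒮 s ⊂ J → minMem 𝒮 j ⊆ J) :
    MaximalNested E (insert (oplus E ((minMem 𝒮 j).erase s) j) (𝒮.erase (minMem 𝒮 s))) ∧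
    nsupport (insert (oplus E ((minMem 𝒮 j).erase s) j) (𝒮.erase (minMem 𝒮 s)))
      = nsupport 𝒮 ∧
    insert (oplus E ((minMem 𝒮 j).erase s) j) (𝒮.erase (minMem 𝒮 s)) ≠ 𝒮 ∧
    (∀ 𝒯 : Finset (Finset (Fin n)), MaximalNested E 𝒯 → nsupport 𝒯 = nsupport 𝒮 →
      𝒯 ≠ 𝒮 → (∀ r ∈ nsupport 𝒮, r ≠ s → minMem 𝒮 r ∈ 𝒯) →
      𝒯 = insert (oplus E ((minMem 𝒮 j).erase s) j) (𝒮.erase (minMem 𝒮 s))) :=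
  stmt4_general n E 𝒮 h𝒮 s j hs hj hlt hcov
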